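/- arXiv:1802.06335 — 5 statements merged into one kernel-verified Lean document; each statement's English description precedes it below -/
import Mathlib

section
/- For elements $x,y,z$ of a Coxeter group, $z \ge_L yz \ge_L xyz$ holds if and only if $y \le_L xy$ and $z \ge_L xyz$. -/
namespace PaperStmt

open scoped Classical

variable {B : Type*} {W : Type*} [Group W] {M : CoxeterMatrix B}

/-- Bruhat (strong) cover: `v = t * u` for a reflection `t`, with `ℓ v = ℓ u + 1`. -/
def BruhatCov (cs : CoxeterSystem M W) (u v : W) : Prop :=
  cs.length v = cs.length u + 1 ∧ ∃ t : W, cs.IsReflection t ∧ v = t * u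

/-- The Bruhat (strong) order, generated by the covering relations. -/
def BruhatLe (cs : CoxeterSystem M W) : W → W → Prop :=
  Relation.ReflTransGen (BruhatCov cs)

/-- Strict Bruhat order. -/
def BruhatLt (cs : CoxeterSystem M W) (u v : W) : Prop :=
  BruhatLe cs u v ∧ u ≠ v

/-- Left weak order: `u ≤_L v` iff `ℓ(v u⁻¹) + ℓ u = ℓ v`. -/
def leftLe (cs : CoxeterSystem M W) (u v : W) : Prop :=
  cs.length (v * u⁻¹) + cs.length u = cs.length v

/-- Right weak order: `u ≤_R v` iff `ℓ u + ℓ(u⁻¹ v) = ℓ v`. -/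
def rightLe (cs : CoxeterSystem M W) (u v : W) : Prop :=
  cs.length u + cs.length (u⁻¹ * v) = cs.length v

/-- Demazure action of a simple reflection: `φ_s(x) = s x` if `s x > x`, else `x`. -/
noncomputable def phi (cs : CoxeterSystem M W) (i : B) (x : W) : W :=
  if BruhatLt cs x (cs.simple i * x) then cs.simple i * x else x

/-- Anti-Demazure action: `ψ_s(x) = s x` if `s x < x`, else `x`. -/
noncomputable def psi (cs : CoxeterSystem M W) (i : B) (x : W) : W :=
  if BruhatLt cs (cs.simple i * x) x then cs.simple i * x else x

/-- Right anti-Demazure action: `ψ^R_s(x) = x s` if `x s < x`, else `x`. -/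
noncomputable def psiR (cs : CoxeterSystem M W) (i : B) (x : W) : W :=
  if BruhatLt cs (x * cs.simple i) x then x * cs.simple i else x

/-- `φ_w` along a word `w = s_1 ⋯ s_n`: `φ_{s_1} ∘ ⋯ ∘ φ_{s_n}`. -/
noncomputable def phiWord (cs : CoxeterSystem M W) (ω : List B) (x : W) : W :=
  ω.foldr (phi cs) x

/-- `ψ_w` along a word `w = s_1 ⋯ s_n`: `ψ_{s_1} ∘ ⋯ ∘ ψ_{s_n}`. -/
noncomputable def psiWord (cs : CoxeterSystem M W) (ω : List B) (x : W) : W :=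
  ω.foldr (psi cs) x

/-- `ψ^R_w` along a word `w = s_1 ⋯ s_n`: `ψ^R_{s_n} ∘ ⋯ ∘ ψ^R_{s_1}`. -/
noncomputable def psiRWord (cs : CoxeterSystem M W) (ω : List B) (x : W) : W :=
  ω.foldl (fun y i => psiR cs i y) x

theorem stmt2 (cs : CoxeterSystem M W) (x y z : W) :
    (leftLe cs (y * z) z ∧ leftLe cs (x * y * z) (y * z)) ↔
      (leftLe cs y (x * y) ∧ leftLe cs (x * y * z) z) := by
  have e1 : z * (y * z)⁻¹ = y⁻¹ := by group
  have e2 : (y * z) * (x * y * z)⁻¹ = x⁻¹ := by group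
  have e3 : (x * y) * y⁻¹ = x := by group
  have e4 : z * (x * y * z)⁻¹ = (x * y)⁻¹ := by group
  simp only [leftLe, e1, e2, e3, e4, cs.length_inv]
  have t1 := cs.length_mul_le x y
  have t2 : cs.length z ≤ cs.length (x * y) + cs.length (x * y * z) := by
    have h := cs.length_mul_le (x * y)⁻¹ (x * y * z)
    have : (x * y)⁻¹ * (x * y * z) = z := by group
    rw [this, cs.length_inv] at h; exact h
  have t3 : cs.length (y * z) ≤ cs.length x + cs.length (x * y * z) := by
    have h := cs.length_mul_le x⁻¹ (x * y * z)
    have : x⁻¹ * (x * y * z) = y * z := by group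
    rw [this, cs.length_inv] at h; exact h
  have t4 : cs.length z ≤ cs.length y + cs.length (y * z) := by
    have h := cs.length_mul_le y⁻¹ (y * z)
    have : y⁻¹ * (y * z) = z := by group
    rw [this, cs.length_inv] at h; exact h
  omega
end PaperStmt
end

section
/- Let $a,b,v$ be elements of a Coxeter group with $\ell(av)=\ell(a)+\ell(v)$ and $\ell(bv)=\ell(b)+\ell(v)$. Then $av < bv$ in the Bruhat order if and only if $a < b$ in the Bruhat order. -/
namespace PaperStmt

open scoped Classical

variable {B : Type*} {W : Type*} [Group W] {M : CoxeterMatrix B}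

/-!
The heart of the matter is the case of a simple reflection `s` with `as > a` and `bs > b`:
then `a ≤ b ↔ as ≤ bs`, and a general `v` is handled by peeling off the letters of a reduced
word. Both implications go by induction along a chain of Bruhat covers, and the one
nontrivial input is an exchange fact: if `x ⋖ y`, `xs > x` and `ys < y`, then `y = xs`.
This holds because every right inversion `t` of `w` (i.e. `ℓ(wt) < ℓ(w)`) occurs, an odd
number of times, in the right inversion sequence of every word for `w`. That parity is an
invariant of `w` thanks to Tits' representation of `W` on `W × ZMod 2`, in which `sᵢ` acts by
`(t, ε) ↦ (sᵢ t sᵢ, ε + [t = sᵢ])`.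
-/

open CoxeterSystem

lemma mul_mul_inv_eq_iff {G : Type*} [Group G] (g x y : G) :
    g * x * g⁻¹ = y ↔ x = g⁻¹ * y * g := by
  constructor <;> rintro rfl <;> group

section ParityRepresentation

variable (cs : CoxeterSystem M W)

local prefix:100 "σ" => cs.simple
local prefix:100 "π" => cs.wordProd

noncomputable def simplePerm (i : B) : Equiv.Perm (W × ZMod 2) :=
  Function.Involutive.toPerm (fun p => (σ i * p.1 * σ i, p.2 + if p.1 = σ i then 1 else 0))
    (by
      rintro ⟨t, ε⟩
      have hconj : σ i * t * σ i = σ i ↔ t = σ i := by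
        simpa using mul_mul_inv_eq_iff (σ i) t (σ i)
      ext
      · simp [mul_assoc]
      · simp only [hconj, add_assoc, CharTwo.add_self_eq_zero, add_zero])

lemma simplePerm_apply (i : B) (t : W) (ε : ZMod 2) :
    simplePerm cs i (t, ε) = (σ i * t * σ i, ε + if t = σ i then 1 else 0) := rfl

lemma simplePerm_mul_pow_apply (i j : B) (n : ℕ) (t : W) (ε : ZMod 2) :
    ((simplePerm cs i * simplePerm cs j) ^ n) (t, ε) =
      ((σ i * σ j) ^ n * t * ((σ i * σ j) ^ n)⁻¹,
        ε + ∑ k ∈ Finset.range (2 * n), if t = (σ j * σ i) ^ k * σ j then 1 else 0) := by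
  have hinv : (σ i * σ j)⁻¹ = σ j * σ i := by simp
  -- conjugation by `sᵢ sⱼ` shifts the dihedral reflections `(sⱼ sᵢ)ᵏ sⱼ` by two steps
  have hshift (k : ℕ) : (σ j * σ i) ^ (k + 2) * σ j =
      (σ i * σ j)⁻¹ * ((σ j * σ i) ^ k * σ j) * (σ i * σ j) := by
    rw [hinv, pow_succ, pow_succ']
    simp [mul_assoc]
  induction n generalizing t ε with
  | zero => simp
  | succ n ih =>
    rw [pow_succ, Equiv.Perm.mul_apply, Equiv.Perm.mul_apply, simplePerm_apply, simplePerm_apply,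
      ih, Prod.mk.injEq]
    constructor
    · simp [pow_succ, mul_assoc]
    · have h1 : σ j * t * σ j = σ i ↔ t = (σ j * σ i) ^ 1 * σ j := by
        simpa using mul_mul_inv_eq_iff (σ j) t (σ i)
      have h2 (k : ℕ) : σ i * (σ j * t * σ j) * σ i = (σ j * σ i) ^ k * σ j ↔
          t = (σ j * σ i) ^ (k + 2) * σ j := by
        rw [hshift, ← mul_mul_inv_eq_iff, hinv]
        simp only [mul_assoc]
      simp only [h1, h2, Finset.sum_range_succ' _ (2 * n + 1), Finset.sum_range_succ' _ (2 * n),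
        mul_add, pow_zero, one_mul]
      ring

lemma isLiftable_simplePerm : M.IsLiftable (simplePerm cs) := by
  intro i j
  ext ⟨t, ε⟩ : 1
  rw [simplePerm_mul_pow_apply, cs.simple_mul_simple_pow, two_mul, Finset.sum_range_add]
  -- the dihedral reflections `(sⱼ sᵢ)ᵏ sⱼ` are periodic in `k` with period `M i j`
  simp only [pow_add, cs.simple_mul_simple_pow', one_mul, CharTwo.add_self_eq_zero]
  simp

noncomputable def parityRep : W →* Equiv.Perm (W × ZMod 2) :=
  cs.lift ⟨simplePerm cs, isLiftable_simplePerm cs⟩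

lemma parityRep_wordProd (ω : List B) (t : W) (ε : ZMod 2) :
    parityRep cs (π ω) (t, ε) =
      (π ω * t * (π ω)⁻¹, ε + (cs.rightInvSeq ω).count t) := by
  induction ω generalizing t ε with
  | nil => simp
  | cons i ω ih =>
    rw [wordProd_cons, map_mul, Equiv.Perm.mul_apply, ih, parityRep, lift_apply_simple,
      simplePerm_apply, rightInvSeq, List.count_cons]
    have hcond : π ω * t * (π ω)⁻¹ = σ i ↔ (π ω)⁻¹ * σ i * π ω = t := by
      rw [mul_mul_inv_eq_iff, eq_comm]
    simp only [hcond, beq_iff_eq]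
    simp only [mul_inv_rev, inv_simple, mul_assoc, Nat.cast_add, Nat.cast_ite,
      Nat.cast_one, Nat.cast_zero, add_assoc]

noncomputable def reflParity (w t : W) : ZMod 2 :=
  (parityRep cs w (t, 0)).2

lemma parityRep_apply (w t : W) (ε : ZMod 2) :
    parityRep cs w (t, ε) = (w * t * w⁻¹, ε + reflParity cs w t) := by
  obtain ⟨ω, rfl⟩ := cs.wordProd_surjective w
  simp [reflParity, parityRep_wordProd]

lemma reflParity_wordProd (ω : List B) (t : W) :
    reflParity cs (π ω) t = (cs.rightInvSeq ω).count t := by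
  simp [reflParity, parityRep_wordProd]

lemma reflParity_mul (x y t : W) :
    reflParity cs (x * y) t = reflParity cs y t + reflParity cs x (y * t * y⁻¹) := by
  have h := parityRep_apply cs (x * y) t 0
  rw [map_mul, Equiv.Perm.mul_apply, parityRep_apply, parityRep_apply] at h
  simpa using (congrArg Prod.snd h).symm

lemma reflParity_one (t : W) : reflParity cs 1 t = 0 := by
  simpa using reflParity_wordProd cs [] t

lemma reflParity_simple_self (i : B) : reflParity cs (σ i) (σ i) = 1 := by
  simpa using reflParity_wordProd cs [i] (σ i)

lemma reflParity_self_of_isReflection {t : W} (ht : cs.IsReflection t) :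
    reflParity cs t t = 1 := by
  obtain ⟨u, i, rfl⟩ := ht
  have hinv : reflParity cs u⁻¹ (u * σ i * u⁻¹) + reflParity cs u (σ i) = 0 := by
    simpa [reflParity_one, mul_assoc] using (reflParity_mul cs u u⁻¹ (u * σ i * u⁻¹)).symm
  rw [reflParity_mul, reflParity_mul]
  simp only [inv_inv, mul_assoc, inv_mul_cancel_left, simple_mul_simple_cancel_left, inv_simple,
    inv_mul_cancel, mul_one, reflParity_simple_self] at hinv ⊢
  linear_combination hinv

lemma reflParity_eq_one_of_isRightInversion {w t : W} (ht : cs.IsRightInversion w t) :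
    reflParity cs w t = 1 := by
  obtain ⟨ξ, hξ, hwt⟩ := cs.exists_isReduced (w * t)
  have hnot : t ∉ cs.rightInvSeq ξ := fun hmem => by
    have := (cs.isRightInversion_of_mem_rightInvSeq hξ hmem).2
    rw [← hwt, mul_assoc, ht.1.mul_self, mul_one] at this
    exact lt_asymm this ht.2
  have h0 : reflParity cs (w * t) t = 0 := by
    simp [hwt, reflParity_wordProd, List.count_eq_zero.mpr hnot]
  calc reflParity cs w t = reflParity cs (w * t * t) t := by rw [mul_assoc, ht.1.mul_self, mul_one]
    _ = 1 := by
      rw [reflParity_mul, ht.1.inv, ht.1.mul_self, one_mul, reflParity_self_of_isReflection cs ht.1,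
        h0, add_zero]

lemma mem_rightInvSeq_of_isRightInversion {ω : List B} {t : W}
    (ht : cs.IsRightInversion (π ω) t) : t ∈ cs.rightInvSeq ω := by
  by_contra hnot
  have := reflParity_eq_one_of_isRightInversion cs ht
  rw [reflParity_wordProd, List.count_eq_zero.mpr hnot] at this
  exact zero_ne_one this

end ParityRepresentation

section BruhatOrder

variable (cs : CoxeterSystem M W)

local prefix:100 "σ" => cs.simple
local prefix:100 "π" => cs.wordProd
local prefix:100 "ℓ" => cs.length

lemma isRightInversion_mul_simple_of_ne {y r : W} {i : B} (hr : cs.IsRightInversion y r)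
    (hne : r ≠ σ i) : cs.IsRightInversion (y * σ i) (σ i * r * σ i) := by
  obtain ⟨ρ, hρ, hys⟩ := cs.exists_isReduced (y * σ i)
  have hy : y = π (ρ.concat i) := by rw [wordProd_concat, ← hys, simple_mul_simple_cancel_right]
  have hmem := mem_rightInvSeq_of_isRightInversion cs (hy ▸ hr)
  rw [rightInvSeq_concat, List.concat_eq_append, List.mem_append, List.mem_singleton] at hmem
  obtain ⟨r₀, hr₀, rfl⟩ := List.mem_map.mp (hmem.resolve_right hne)
  rw [hys]
  simpa [mul_assoc] using cs.isRightInversion_of_mem_rightInvSeq hρ hr₀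

lemma eq_mul_simple_of_bruhatCov {x y : W} {i : B} (hxy : BruhatCov cs x y)
    (hx : ℓ (x * σ i) = ℓ x + 1) (hy : ℓ (y * σ i) + 1 = ℓ y) : y = x * σ i := by
  obtain ⟨hlen, t, ht, rfl⟩ := hxy
  by_contra hne
  set r := x⁻¹ * t * x
  have htx : t * x = x * r := by simp [r, mul_assoc]
  have htxr : t * x * r = x := by simp [r, mul_assoc, ← mul_assoc t t, ht.mul_self]
  have hr : cs.IsRightInversion (t * x) r := by
    refine ⟨by simpa using ht.conj x⁻¹, ?_⟩
    rw [htxr]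
    omega
  have hri : r ≠ σ i := fun h => hne (by rw [htx, h])
  have := (isRightInversion_mul_simple_of_ne cs hr hri).2
  rw [show t * x * σ i * (σ i * r * σ i) = t * x * r * σ i by simp [mul_assoc], htxr] at this
  omega

lemma bruhatCov_mul_right {x y : W} (h : BruhatCov cs x y) (g : W)
    (hg : ℓ (y * g) = ℓ (x * g) + 1) : BruhatCov cs (x * g) (y * g) := by
  obtain ⟨-, t, ht, rfl⟩ := h
  exact ⟨hg, t, ht, mul_assoc _ _ _⟩

lemma bruhatCov_mul_simple {w : W} {i : B} (h : ℓ (w * σ i) = ℓ w + 1) :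
    BruhatCov cs w (w * σ i) :=
  ⟨h, w * σ i * w⁻¹, ⟨w, i, rfl⟩, by group⟩

lemma bruhatLe_mul_simple_of_ascent {u w : W} {i : B} (h : BruhatLe cs u w)
    (hu : ℓ (u * σ i) = ℓ u + 1) (hw : ℓ (w * σ i) = ℓ w + 1) :
    BruhatLe cs (u * σ i) (w * σ i) := by
  induction h using Relation.ReflTransGen.head_induction_on with
  | refl => exact .refl
  | @head x c hxc hcw ih =>
    rcases cs.length_mul_simple c i with hc | hc
    · exact .head (bruhatCov_mul_right cs hxc _ (by have := hxc.1; omega)) (ih hc)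
    · rw [← eq_mul_simple_of_bruhatCov cs hxc hu hc]
      exact hcw.tail (bruhatCov_mul_simple cs hw)

lemma bruhatLe_mul_simple_of_descent {u w : W} {i : B} (h : BruhatLe cs u w)
    (hu : ℓ (u * σ i) + 1 = ℓ u) (hw : ℓ (w * σ i) + 1 = ℓ w) :
    BruhatLe cs (u * σ i) (w * σ i) := by
  induction h with
  | refl => exact .refl
  | @tail c y huc hcy ih =>
    rcases cs.length_mul_simple c i with hc | hc
    · rw [eq_mul_simple_of_bruhatCov cs hcy hc hw, simple_mul_simple_cancel_right]
      have hcov : BruhatCov cs (u * σ i) u := by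
        simpa using bruhatCov_mul_simple cs (w := u * σ i) (i := i) (by simpa using hu.symm)
      exact .head hcov huc
    · exact (ih hc).tail (bruhatCov_mul_right cs hcy _ (by have := hcy.1; omega))

lemma bruhatLe_mul_simple_iff {a b : W} {i : B} (ha : ℓ (a * σ i) = ℓ a + 1)
    (hb : ℓ (b * σ i) = ℓ b + 1) : BruhatLe cs (a * σ i) (b * σ i) ↔ BruhatLe cs a b := by
  refine ⟨fun h => ?_, fun h => bruhatLe_mul_simple_of_ascent cs h ha hb⟩
  simpa using bruhatLe_mul_simple_of_descent cs h (i := i) (by simpa using ha.symm)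
    (by simpa using hb.symm)

lemma length_mul_eq_add_of_length_mul_mul_eq_add {a x y : W} (hxy : ℓ (x * y) = ℓ x + ℓ y)
    (h : ℓ (a * (x * y)) = ℓ a + ℓ (x * y)) :
    ℓ (a * x) = ℓ a + ℓ x ∧ ℓ (a * x * y) = ℓ (a * x) + ℓ y := by
  have h₁ := cs.length_mul_le (a * x) y
  have h₂ := cs.length_mul_le a x
  rw [← mul_assoc] at h
  omega

lemma bruhatLe_mul_iff_of_length_mul_eq_add {a b v : W} (ha : ℓ (a * v) = ℓ a + ℓ v)
    (hb : ℓ (b * v) = ℓ b + ℓ v) : BruhatLe cs (a * v) (b * v) ↔ BruhatLe cs a b := by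
  obtain ⟨ω, hω, rfl⟩ := cs.exists_isReduced v
  induction ω generalizing a b with
  | nil => simp
  | cons i ω ih =>
    have hω' : cs.IsReduced ω := by simpa using hω.drop 1
    have hsplit : ℓ (σ i * π ω) = ℓ (σ i) + ℓ (π ω) := by
      rw [← wordProd_cons, hω.eq, hω'.eq, length_simple, List.length_cons, add_comm]
    rw [wordProd_cons] at ha hb ⊢
    obtain ⟨ha₁, ha₂⟩ := length_mul_eq_add_of_length_mul_mul_eq_add cs hsplit ha
    obtain ⟨hb₁, hb₂⟩ := length_mul_eq_add_of_length_mul_mul_eq_add cs hsplit hb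
    rw [length_simple] at ha₁ hb₁
    rw [← mul_assoc, ← mul_assoc, ih hω' ha₂ hb₂, bruhatLe_mul_simple_iff cs ha₁ hb₁]

end BruhatOrder

theorem stmt3 (cs : CoxeterSystem M W) (a b v : W)
    (ha : cs.length (a * v) = cs.length a + cs.length v)
    (hb : cs.length (b * v) = cs.length b + cs.length v) :
    BruhatLt cs (a * v) (b * v) ↔ BruhatLt cs a b := by
  rw [BruhatLt, BruhatLt, bruhatLe_mul_iff_of_length_mul_eq_add cs ha hb, Ne, mul_left_inj]

end PaperStmt
end

section
/- Let $s \in S$ and suppose $v,w \in W$ have a meet $v \wedge w$ under the Bruhat order. Then $\phi_s(v)$ and $\phi_s(w)$ have a meet under the Bruhat order, and it equals $\phi_s(v \wedge w)$. -/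
/-!
The anti-Demazure operator `ψ_s` (step down by `s` when possible) is left adjoint to `φ_s` for the
Bruhat order, `ψ_s z ≤ v ↔ z ≤ φ_s v`, since both operators are monotone, `ψ_s ∘ φ_s ≤ id` and
`id ≤ φ_s ∘ ψ_s`; a right adjoint preserves all existing meets. Monotonicity is the lifting
property of Bruhat covers, which rests on the strong exchange condition. That in turn comes from
the action of `W` on pairs (reflection, parity), which makes the parity of the number of
occurrences of `t` in the left inversion sequence of a word an invariant of its product.
-/

namespace PaperStmt

open scoped Classical

variable {B : Type*} {W : Type*} [Group W] {M : CoxeterMatrix B}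

section InversionParity

open List CoxeterSystem

variable (cs : CoxeterSystem M W)

local prefix:100 "s" => cs.simple
local prefix:100 "π" => cs.wordProd
local prefix:100 "lis" => cs.leftInvSeq

theorem leftInvSeq_append (ω₁ ω₂ : List B) :
    lis (ω₁ ++ ω₂) = lis ω₁ ++ (lis ω₂).map (MulAut.conj (π ω₁)) := by
  induction ω₁ with
  | nil => simp
  | cons i ω₁ ih =>
    simp only [cons_append, leftInvSeq, ih, map_append, map_map, cs.wordProd_cons, map_mul]
    rfl

theorem count_leftInvSeq_append (ω₁ ω₂ : List B) (t : W) :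
    (lis (ω₁ ++ ω₂)).count t = (lis ω₁).count t + (lis ω₂).count ((π ω₁)⁻¹ * t * π ω₁) := by
  rw [leftInvSeq_append, count_append,
    ← count_map_of_injective _ _ (MulAut.conj (π ω₁)).injective ((π ω₁)⁻¹ * t * π ω₁)]
  congr 2
  simp [mul_assoc]

theorem prod_map_alternatingWord_two_mul {G : Type*} [Monoid G] (f : B → G) (i j : B) (m : ℕ) :
    ((alternatingWord i j (2 * m)).map f).prod = (f i * f j) ^ m := by
  induction m with
  | zero => simp [alternatingWord]
  | succ m ih =>
    rw [show 2 * (m + 1) = 2 * m + 1 + 1 by ring, alternatingWord_succ', alternatingWord_succ',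
      if_neg (by simp [parity_simps]), if_pos (by simp), map_cons, map_cons, prod_cons, prod_cons,
      ih, pow_succ', mul_assoc]

theorem even_count_leftInvSeq_braid (i j : B) (t : W) :
    Even ((lis (alternatingWord i j (2 * M i j))).count t) := by
  set l := lis (alternatingWord i j (2 * M i j))
  have hlen : l.length = 2 * M i j := by simp [l]
  have hentry : ∀ k (hk : k < 2 * M i j), l[k]'(by omega) = s i * (s j * s i) ^ k := by
    intro k hk
    rw [getElem_leftInvSeq_alternatingWord cs i j _ k hk, prod_alternatingWord_eq_mul_pow,
      if_neg (by simp [parity_simps]), show (2 * k + 1) / 2 = k by omega]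
  have hperiod : l.drop (M i j) = l.take (M i j) := by
    refine ext_getElem (by simp [hlen]; omega) fun k h₁ h₂ => ?_
    simp only [length_drop, length_take, hlen] at h₁ h₂
    rw [getElem_drop, getElem_take, hentry _ (by omega), hentry _ (by omega), pow_add,
      simple_mul_simple_pow', one_mul]
  rw [← take_append_drop (M i j) l, count_append, hperiod]
  exact ⟨_, rfl⟩

/-- From the proof of the strong exchange condition (Björner–Brenti, Thm. 1.4.3): that this extends
to a representation of `W` makes the parity of occurrences of `t` in the left inversion sequence of
a word depend only on its product. -/
noncomputable def simpleParityAction (i : B) : Function.End (W × ZMod 2) :=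
  fun p => (MulAut.conj (s i) p.1, p.2 + if p.1 = s i then 1 else 0)

theorem prod_map_simpleParityAction (ω : List B) (t : W) (ε : ZMod 2) :
    (ω.map (simpleParityAction cs)).prod (t, ε)
      = (π ω * t * (π ω)⁻¹, ε + (lis ω).count (π ω * t * (π ω)⁻¹)) := by
  induction ω with
  | nil =>
    change (t, ε) = _
    simp
  | cons i ω ih =>
    set x := π ω * t * (π ω)⁻¹
    have hx : π (i :: ω) * t * (π (i :: ω))⁻¹ = MulAut.conj (s i) x := by
      simp [x, cs.wordProd_cons, mul_assoc]
    rw [map_cons, prod_cons]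
    change simpleParityAction cs i ((ω.map (simpleParityAction cs)).prod (t, ε)) = _
    rw [ih, hx]
    simp only [simpleParityAction, leftInvSeq, count_cons,
      count_map_of_injective _ _ (MulAut.conj (s i)).injective]
    have hfix : s i = MulAut.conj (s i) x ↔ x = s i :=
      eq_comm.trans ((MulAut.conj (s i)).injective.eq_iff' (by simp))
    simp only [beq_iff_eq, hfix, Nat.cast_add, Nat.cast_ite, Nat.cast_one, Nat.cast_zero,
      add_assoc]

theorem isLiftable_simpleParityAction : M.IsLiftable (simpleParityAction cs) := by
  intro i j
  have hbraid : π (alternatingWord i j (2 * M i j)) = 1 := by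
    rw [wordProd, prod_map_alternatingWord_two_mul, simple_mul_simple_pow]
  funext ⟨t, ε⟩
  obtain ⟨c, hc⟩ := even_count_leftInvSeq_braid cs i j t
  rw [← prod_map_alternatingWord_two_mul, prod_map_simpleParityAction, hbraid]
  simp only [one_mul, inv_one, mul_one, hc, Nat.cast_add, CharTwo.add_self_eq_zero, add_zero]
  rfl

theorem count_leftInvSeq_parity_eq {ω ω' : List B} (h : π ω = π ω') (t : W) :
    ((lis ω).count t : ZMod 2) = (lis ω').count t := by
  have hrep : ∀ σ : List B, cs.lift ⟨_, isLiftable_simpleParityAction cs⟩ (π σ)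
      = (σ.map (simpleParityAction cs)).prod := fun σ => by
    rw [wordProd, map_list_prod, map_map]
    congr 2
    funext i
    exact cs.lift_apply_simple _ i
  have key := congrFun (hrep ω') ((π ω')⁻¹ * t * π ω', 0)
  rw [← h, hrep ω, prod_map_simpleParityAction, prod_map_simpleParityAction, ← h] at key
  simpa [mul_assoc] using (congrArg Prod.snd key)

noncomputable def inversionParity (w t : W) : ZMod 2 :=
  (lis (cs.wordProd_surjective w).choose).count t

theorem inversionParity_wordProd (ω : List B) (t : W) :
    inversionParity cs (π ω) t = (lis ω).count t :=
  count_leftInvSeq_parity_eq cs (cs.wordProd_surjective _).choose_spec t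

theorem inversionParity_mul (x y t : W) :
    inversionParity cs (x * y) t = inversionParity cs x t + inversionParity cs y (x⁻¹ * t * x) := by
  obtain ⟨ω₁, rfl⟩ := cs.wordProd_surjective x
  obtain ⟨ω₂, rfl⟩ := cs.wordProd_surjective y
  rw [← wordProd_append, inversionParity_wordProd, inversionParity_wordProd,
    inversionParity_wordProd, count_leftInvSeq_append, Nat.cast_add]

theorem inversionParity_self {t : W} (ht : cs.IsReflection t) : inversionParity cs t t = 1 := by
  obtain ⟨u, i, rfl⟩ := ht
  -- the cocycle identity applied to `t = (u s) u⁻¹` and to `1 = u u⁻¹`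
  have hsimple : inversionParity cs (s i) (s i) = 1 := by
    simpa using inversionParity_wordProd cs [i] (s i)
  have hone : inversionParity cs (u * u⁻¹) (u * s i * u⁻¹) = 0 := by
    simpa using inversionParity_wordProd cs [] (u * s i * u⁻¹)
  rw [inversionParity_mul] at hone
  rw [inversionParity_mul, inversionParity_mul]
  simp only [show ∀ g : W, u⁻¹ * (u * g * u⁻¹) * u = g by intro g; group] at hone ⊢
  rw [show (u * s i)⁻¹ * (u * s i * u⁻¹) * (u * s i) = s i by group, hsimple]
  linear_combination hone

theorem mem_leftInvSeq_of_isLeftInversion {ω : List B} {t : W}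
    (ht : cs.IsLeftInversion (π ω) t) : t ∈ lis ω := by
  obtain ⟨τ, hτ, hτω⟩ := cs.exists_isReduced (t * π ω)
  have hτt : (lis τ).count t = 0 := count_eq_zero.mpr fun hmem => by
    have := (cs.isLeftInversion_of_mem_leftInvSeq hτ hmem).2
    rw [← hτω, ← mul_assoc, ht.1.mul_self, one_mul] at this
    exact lt_asymm this ht.2
  have hparity : inversionParity cs (π ω) t = 1 := by
    rw [show π ω = t * (t * π ω) by rw [← mul_assoc, ht.1.mul_self, one_mul],
      inversionParity_mul, inversionParity_self cs ht.1, show t⁻¹ * t * t = t by group, hτω,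
      inversionParity_wordProd, hτt, Nat.cast_zero, add_zero]
  rw [inversionParity_wordProd] at hparity
  by_contra hmem
  simp [count_eq_zero_of_not_mem hmem] at hparity

theorem exists_mul_wordProd_eq_eraseIdx {ω : List B} {t : W}
    (ht : cs.IsLeftInversion (π ω) t) : ∃ j < ω.length, t * π ω = π (ω.eraseIdx j) := by
  obtain ⟨j, hj, rfl⟩ := mem_iff_getElem.mp (mem_leftInvSeq_of_isLeftInversion cs ht)
  refine ⟨j, by simpa using hj, ?_⟩
  rw [← getD_leftInvSeq_mul_wordProd, getD_eq_getElem]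

end InversionParity

section Demazure

open List CoxeterSystem

variable {cs : CoxeterSystem M W}

local prefix:100 "s" => cs.simple
local prefix:100 "π" => cs.wordProd
local prefix:100 "ℓ" => cs.length

theorem BruhatLe.eq_or_length_lt {u v : W} (h : BruhatLe cs u v) : u = v ∨ ℓ u < ℓ v := by
  induction h with
  | refl => exact .inl rfl
  | tail _ hcov ih => exact .inr (by rcases ih with rfl | ih <;> rw [hcov.1] <;> omega)

theorem bruhatCov_simple_mul {x : W} {i : B} (h : ¬cs.IsLeftDescent x i) :
    BruhatCov cs x (s i * x) :=
  ⟨cs.not_isLeftDescent_iff.mp h, s i, cs.isReflection_simple i, rfl⟩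

theorem bruhatLt_simple_mul_iff {x : W} {i : B} :
    BruhatLt cs x (s i * x) ↔ ¬cs.IsLeftDescent x i := by
  refine ⟨fun ⟨hle, hne⟩ => ?_, fun h => ⟨.single (bruhatCov_simple_mul h), fun he => ?_⟩⟩
  · rcases hle.eq_or_length_lt with he | hlt
    · exact absurd he hne
    · exact not_lt.mpr hlt.le
  · exact cs.length_simple_mul_ne x i (congrArg cs.length he).symm

theorem simple_mul_bruhatLt_iff {x : W} {i : B} :
    BruhatLt cs (s i * x) x ↔ cs.IsLeftDescent x i := by
  have := bruhatLt_simple_mul_iff (cs := cs) (x := s i * x) (i := i)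
  rwa [cs.simple_mul_simple_cancel_left, ← cs.isLeftDescent_iff_not_isLeftDescent_mul] at this

theorem phi_of_isLeftDescent {x : W} {i : B} (h : cs.IsLeftDescent x i) : phi cs i x = x :=
  if_neg (bruhatLt_simple_mul_iff.not_left.mpr h)

theorem phi_of_not_isLeftDescent {x : W} {i : B} (h : ¬cs.IsLeftDescent x i) :
    phi cs i x = s i * x :=
  if_pos (bruhatLt_simple_mul_iff.mpr h)

theorem psi_of_isLeftDescent {x : W} {i : B} (h : cs.IsLeftDescent x i) : psi cs i x = s i * x :=
  if_pos (simple_mul_bruhatLt_iff.mpr h)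

theorem psi_of_not_isLeftDescent {x : W} {i : B} (h : ¬cs.IsLeftDescent x i) : psi cs i x = x :=
  if_neg (simple_mul_bruhatLt_iff.not.mpr h)

theorem BruhatCov.eq_simple_mul_or_isLeftDescent {u w : W} (hcov : BruhatCov cs u w) {i : B}
    (hw : cs.IsLeftDescent w i) : u = s i * w ∨ cs.IsLeftDescent u i := by
  obtain ⟨hlen, t, ht, rfl⟩ := hcov
  obtain ⟨σ, hσ, hσw⟩ := cs.exists_isReduced (s i * (t * u))
  have hword : π (i :: σ) = t * u := by rw [wordProd_cons, ← hσw, cs.simple_mul_simple_cancel_left]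
  have htu : t * (t * u) = u := by rw [← mul_assoc, ht.mul_self, one_mul]
  obtain ⟨j, hj, hu⟩ := exists_mul_wordProd_eq_eraseIdx cs (ω := i :: σ) (t := t)
    ⟨ht, by rw [hword, htu]; omega⟩
  rw [hword, htu] at hu
  rcases j with _ | k
  · exact .inl (by rw [hσw, hu, eraseIdx_cons_zero])
  · right
    rw [eraseIdx_cons_succ, wordProd_cons] at hu
    have hk : k < σ.length := by simpa using hj
    have hsu : ℓ (s i * u) ≤ σ.length - 1 := by
      rw [hu, cs.simple_mul_simple_cancel_left]
      exact (cs.length_wordProd_le _).trans (by simp [length_eraseIdx, hk])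
    have hw' := cs.isLeftDescent_iff.mp hw
    rw [hσw, hσ.eq] at hw'
    unfold IsLeftDescent
    omega

theorem BruhatCov.simple_mul {u w : W} (hcov : BruhatCov cs u w) {i : B}
    (hlen : ℓ (s i * w) = ℓ (s i * u) + 1) : BruhatCov cs (s i * u) (s i * w) := by
  obtain ⟨-, t, ht, rfl⟩ := hcov
  refine ⟨hlen, s i * t * (s i)⁻¹, ht.conj (s i), ?_⟩
  simp [mul_assoc, cs.inv_simple]

theorem bruhatLe_simple_mul {x : W} {i : B} (h : ¬cs.IsLeftDescent x i) :
    BruhatLe cs x (s i * x) :=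
  .single (bruhatCov_simple_mul h)

theorem simple_mul_bruhatLe {x : W} {i : B} (h : cs.IsLeftDescent x i) :
    BruhatLe cs (s i * x) x :=
  (simple_mul_bruhatLt_iff.mpr h).1

theorem phi_bruhatLe_phi_of_bruhatCov {u w : W} (h : BruhatCov cs u w) (i : B) :
    BruhatLe cs (phi cs i u) (phi cs i w) := by
  by_cases hu : cs.IsLeftDescent u i <;> by_cases hw : cs.IsLeftDescent w i
  · rw [phi_of_isLeftDescent hu, phi_of_isLeftDescent hw]
    exact .single h
  · rw [phi_of_isLeftDescent hu, phi_of_not_isLeftDescent hw]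
    exact .tail (.single h) (bruhatCov_simple_mul hw)
  · rw [phi_of_not_isLeftDescent hu, phi_of_isLeftDescent hw]
    rcases h.eq_simple_mul_or_isLeftDescent hw with rfl | hu'
    · rw [cs.simple_mul_simple_cancel_left]
      exact .refl
    · exact absurd hu' hu
  · rw [phi_of_not_isLeftDescent hu, phi_of_not_isLeftDescent hw]
    have := h.1
    rw [cs.not_isLeftDescent_iff] at hu hw
    exact .single (h.simple_mul (by omega))

theorem psi_bruhatLe_psi_of_bruhatCov {u w : W} (h : BruhatCov cs u w) (i : B) :
    BruhatLe cs (psi cs i u) (psi cs i w) := by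
  by_cases hu : cs.IsLeftDescent u i <;> by_cases hw : cs.IsLeftDescent w i
  · rw [psi_of_isLeftDescent hu, psi_of_isLeftDescent hw]
    have := h.1
    rw [cs.isLeftDescent_iff] at hu hw
    exact .single (h.simple_mul (by omega))
  · rw [psi_of_isLeftDescent hu, psi_of_not_isLeftDescent hw]
    exact .tail (simple_mul_bruhatLe hu) h
  · rw [psi_of_not_isLeftDescent hu, psi_of_isLeftDescent hw]
    rcases h.eq_simple_mul_or_isLeftDescent hw with rfl | hu'
    · exact .refl
    · exact absurd hu' hu
  · rw [psi_of_not_isLeftDescent hu, psi_of_not_isLeftDescent hw]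
    exact .single h

theorem phi_mono {u w : W} (i : B) (h : BruhatLe cs u w) : BruhatLe cs (phi cs i u) (phi cs i w) :=
  Relation.ReflTransGen.lift' (p := BruhatCov cs) (phi cs i)
    (fun _ _ hcov => phi_bruhatLe_phi_of_bruhatCov hcov i) _ _ h

theorem psi_mono {u w : W} (i : B) (h : BruhatLe cs u w) : BruhatLe cs (psi cs i u) (psi cs i w) :=
  Relation.ReflTransGen.lift' (p := BruhatCov cs) (psi cs i)
    (fun _ _ hcov => psi_bruhatLe_psi_of_bruhatCov hcov i) _ _ h

theorem bruhatLe_phi_psi (i : B) (x : W) : BruhatLe cs x (phi cs i (psi cs i x)) := by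
  by_cases h : cs.IsLeftDescent x i
  · rw [psi_of_isLeftDescent h,
      phi_of_not_isLeftDescent (cs.isLeftDescent_iff_not_isLeftDescent_mul.mp h),
      cs.simple_mul_simple_cancel_left]
    exact .refl
  · rw [psi_of_not_isLeftDescent h, phi_of_not_isLeftDescent h]
    exact bruhatLe_simple_mul h

theorem psi_phi_bruhatLe (i : B) (x : W) : BruhatLe cs (psi cs i (phi cs i x)) x := by
  by_cases h : cs.IsLeftDescent x i
  · rw [phi_of_isLeftDescent h, psi_of_isLeftDescent h]
    exact simple_mul_bruhatLe h
  · have hsx : cs.IsLeftDescent (s i * x) i := by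
      rwa [cs.isLeftDescent_iff_not_isLeftDescent_mul, cs.simple_mul_simple_cancel_left]
    rw [phi_of_not_isLeftDescent h, psi_of_isLeftDescent hsx, cs.simple_mul_simple_cancel_left]
    exact .refl

theorem psi_bruhatLe_iff_bruhatLe_phi (i : B) (z v : W) :
    BruhatLe cs (psi cs i z) v ↔ BruhatLe cs z (phi cs i v) :=
  ⟨fun h => (bruhatLe_phi_psi i z).trans (phi_mono i h),
    fun h => (psi_mono i h).trans (psi_phi_bruhatLe i v)⟩

end Demazure

theorem stmt7 (cs : CoxeterSystem M W) (i : B) (v w m : W)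
    (h₁ : BruhatLe cs m v) (h₂ : BruhatLe cs m w)
    (hmax : ∀ z, BruhatLe cs z v → BruhatLe cs z w → BruhatLe cs z m) :
    BruhatLe cs (phi cs i m) (phi cs i v) ∧ BruhatLe cs (phi cs i m) (phi cs i w) ∧
      ∀ z, BruhatLe cs z (phi cs i v) → BruhatLe cs z (phi cs i w) →
        BruhatLe cs z (phi cs i m) := by
  refine ⟨phi_mono i h₁, phi_mono i h₂, fun z hzv hzw => ?_⟩
  rw [← psi_bruhatLe_iff_bruhatLe_phi] at hzv hzw ⊢
  exact hmax _ hzv hzw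
end PaperStmt
end

section
/- Let $x,y,z \in W$ with $x*y=z$ and set $x' = zy^{-1}$. Then $x' \le_R z$, $\ell(z) = \ell(x') + \ell(y)$, and $x' \le x$ in the Bruhat order. -/
namespace PaperStmt

open scoped Classical

variable {B : Type*} {W : Type*} [Group W] {M : CoxeterMatrix B}

/-! ### Auxiliary development: reflection cocycle, strong exchange, lifting -/

/-- Auxiliary group recording a group element together with a `ZMod 2`-valued
cocycle (used to count reflections in inversion sequences mod 2). -/
structure NGrp (W : Type*) where
  toFun : W → ZMod 2
  elt : W

private lemma zmod2_add_self : ∀ z : ZMod 2, z + z = 0 := by decide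

namespace NGrp

variable {W : Type*} [Group W]

instance : Mul (NGrp W) :=
  ⟨fun a b => ⟨a.toFun + fun x => b.toFun (a.elt⁻¹ * x * a.elt), a.elt * b.elt⟩⟩

instance : One (NGrp W) := ⟨⟨0, 1⟩⟩

instance : Inv (NGrp W) :=
  ⟨fun a => ⟨fun x => a.toFun (a.elt * x * a.elt⁻¹), a.elt⁻¹⟩⟩

@[simp] lemma mul_toFun (a b : NGrp W) (x : W) :
    (a * b).toFun x = a.toFun x + b.toFun (a.elt⁻¹ * x * a.elt) := rfl

@[simp] lemma mul_elt (a b : NGrp W) : (a * b).elt = a.elt * b.elt := rfl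

@[simp] lemma one_toFun (x : W) : (1 : NGrp W).toFun x = 0 := rfl

@[simp] lemma one_elt : (1 : NGrp W).elt = 1 := rfl

lemma ext' {a b : NGrp W} (h1 : ∀ x, a.toFun x = b.toFun x) (h2 : a.elt = b.elt) : a = b := by
  cases a; cases b
  simp only [NGrp.mk.injEq]
  exact ⟨funext h1, h2⟩

instance : Group (NGrp W) where
  mul_assoc a b c := by
    refine ext' (fun x => ?_) ?_
    · show a.toFun x + b.toFun (a.elt⁻¹ * x * a.elt) +
        c.toFun ((a.elt * b.elt)⁻¹ * x * (a.elt * b.elt)) =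
        a.toFun x + (b.toFun (a.elt⁻¹ * x * a.elt) +
          c.toFun (b.elt⁻¹ * (a.elt⁻¹ * x * a.elt) * b.elt))
      rw [add_assoc]
      congr 2
      group
    · show a.elt * b.elt * c.elt = a.elt * (b.elt * c.elt)
      rw [mul_assoc]
  one_mul a := by
    refine ext' (fun x => ?_) ?_
    · show 0 + a.toFun ((1 : W)⁻¹ * x * 1) = a.toFun x
      rw [zero_add]; congr 1; group
    · show 1 * a.elt = a.elt
      rw [one_mul]
  mul_one a := by
    refine ext' (fun x => ?_) ?_
    · show a.toFun x + 0 = a.toFun x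
      rw [add_zero]
    · show a.elt * 1 = a.elt
      rw [mul_one]
  inv_mul_cancel a := by
    refine ext' (fun x => ?_) ?_
    · show a.toFun (a.elt * x * a.elt⁻¹) +
        a.toFun ((a.elt⁻¹)⁻¹ * x * a.elt⁻¹) = 0
      rw [inv_inv]
      exact zmod2_add_self _
    · show a.elt⁻¹ * a.elt = 1
      rw [inv_mul_cancel]

lemma pow_def (a : NGrp W) (n : ℕ) :
    a ^ n = ⟨fun x => ∑ k ∈ Finset.range n, a.toFun (a.elt⁻¹ ^ k * x * a.elt ^ k),
      a.elt ^ n⟩ := by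
  induction n with
  | zero =>
    refine ext' (fun x => ?_) ?_
    · simp
    · simp
  | succ n ih =>
    rw [pow_succ, ih]
    refine ext' (fun x => ?_) ?_
    · show (∑ k ∈ Finset.range n, a.toFun (a.elt⁻¹ ^ k * x * a.elt ^ k)) +
        a.toFun ((a.elt ^ n)⁻¹ * x * a.elt ^ n)
        = ∑ k ∈ Finset.range (n + 1), a.toFun (a.elt⁻¹ ^ k * x * a.elt ^ k)
      rw [Finset.sum_range_succ, inv_pow]
    · show a.elt ^ n * a.elt = a.elt ^ (n + 1)
      rw [pow_succ]

end NGrp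

section Aux

variable (cs : CoxeterSystem M W)

private lemma conj_iff_gen (g v y : W) : (g⁻¹ * y * g = v) ↔ (y = g * v * g⁻¹) := by
  constructor
  · intro h; rw [← h]; group
  · intro h; rw [h]; group

private lemma conj_simple_pow (i j : B) (k : ℕ) :
    ((cs.simple i * cs.simple j) ^ k)⁻¹
      = cs.simple i * (cs.simple i * cs.simple j) ^ k * cs.simple i := by
  have h : (cs.simple i * cs.simple j)⁻¹
      = cs.simple i * (cs.simple i * cs.simple j) * (cs.simple i)⁻¹ := by
    simp [mul_inv_rev, cs.inv_simple, mul_assoc, cs.simple_mul_simple_cancel_left]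
  rw [← inv_pow, h, conj_pow, cs.inv_simple]

private lemma sum_range_two_mul (C : ℕ → ZMod 2) (m : ℕ) :
    ∑ k ∈ Finset.range m, (C (2 * k) + C (2 * k + 1)) = ∑ r ∈ Finset.range (2 * m), C r := by
  induction m with
  | zero => simp
  | succ m ih =>
    rw [Finset.sum_range_succ, ih, (by ring : 2 * (m + 1) = (2 * m + 1) + 1),
      Finset.sum_range_succ, Finset.sum_range_succ, add_assoc]

/-- The cocycle data is liftable through the Coxeter presentation. -/
private lemma nliftable :
    CoxeterMatrix.IsLiftable M (fun i : B =>
      (⟨fun x => if x = cs.simple i then 1 else 0, cs.simple i⟩ : NGrp W)) := by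
  intro i j
  set u := cs.simple i * cs.simple j with hu
  set m := M i j with hm
  have hum : u ^ m = 1 := cs.simple_mul_simple_pow i j
  have hconj : ∀ k : ℕ, (u ^ k)⁻¹ = cs.simple i * u ^ k * cs.simple i :=
    conj_simple_pow cs i j
  have hval : ∀ k r : ℕ,
      u ^ k * (u ^ r * cs.simple i) * (u ^ k)⁻¹ = u ^ (2 * k + r) * cs.simple i := by
    intro k r
    rw [hconj]
    have h2 : u ^ (2 * k + r) = u ^ k * (u ^ r * u ^ k) := by
      rw [← pow_add, ← pow_add]; congr 1; ring
    rw [h2]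
    simp only [mul_assoc, cs.simple_mul_simple_cancel_left]
  set a := ((⟨fun x => if x = cs.simple i then 1 else 0, cs.simple i⟩ : NGrp W) *
    ⟨fun x => if x = cs.simple j then 1 else 0, cs.simple j⟩) with ha
  have hae : a.elt = u := rfl
  have hat : ∀ y : W, a.toFun y = (if y = cs.simple i then (1 : ZMod 2) else 0) +
      (if (cs.simple i)⁻¹ * y * cs.simple i = cs.simple j then (1 : ZMod 2) else 0) := fun y => rfl
  rw [NGrp.pow_def]
  refine NGrp.ext' (fun x => ?_) (by rw [hae, hum]; rfl)
  show ∑ k ∈ Finset.range m, a.toFun (a.elt⁻¹ ^ k * x * a.elt ^ k) = (0 : ZMod 2)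
  have hterm : ∀ k : ℕ, a.toFun (a.elt⁻¹ ^ k * x * a.elt ^ k) =
      (if x = u ^ (2 * k) * cs.simple i then (1 : ZMod 2) else 0) +
      (if x = u ^ (2 * k + 1) * cs.simple i then (1 : ZMod 2) else 0) := by
    intro k
    rw [hat, hae, inv_pow]
    congr 1
    · refine if_congr ?_ rfl rfl
      rw [conj_iff_gen]
      have h0 := hval k 0
      rw [pow_zero, one_mul, add_zero] at h0
      rw [h0]
    · refine if_congr ?_ rfl rfl
      rw [conj_iff_gen, conj_iff_gen]
      have h1 : cs.simple i * cs.simple j * (cs.simple i)⁻¹ = u ^ 1 * cs.simple i := by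
        rw [cs.inv_simple, pow_one, hu, mul_assoc]
      rw [h1, hval k 1]
  calc ∑ k ∈ Finset.range m, a.toFun (a.elt⁻¹ ^ k * x * a.elt ^ k)
      = ∑ k ∈ Finset.range m,
        ((if x = u ^ (2 * k) * cs.simple i then (1 : ZMod 2) else 0) +
         (if x = u ^ (2 * k + 1) * cs.simple i then (1 : ZMod 2) else 0)) :=
        Finset.sum_congr rfl (fun k _ => hterm k)
    _ = ∑ r ∈ Finset.range (2 * m), (if x = u ^ r * cs.simple i then (1 : ZMod 2) else 0) :=
        sum_range_two_mul (fun r => if x = u ^ r * cs.simple i then (1 : ZMod 2) else 0) m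
    _ = 0 := by
        rw [two_mul, Finset.sum_range_add, ← Finset.sum_add_distrib]
        refine Finset.sum_eq_zero (fun r _ => ?_)
        rw [pow_add, hum, one_mul]
        exact zmod2_add_self _

/-- The reflection-counting cocycle homomorphism. -/
private noncomputable def NHom : W →* NGrp W :=
  cs.lift ⟨fun i : B =>
    (⟨fun x => if x = cs.simple i then 1 else 0, cs.simple i⟩ : NGrp W), nliftable cs⟩

/-- The reflection-counting cocycle. -/
private noncomputable def NN (w x : W) : ZMod 2 := (NHom cs w).toFun x

private lemma NHom_elt (w : W) : (NHom cs w).elt = w := by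
  let eltHom : NGrp W →* W :=
    { toFun := NGrp.elt, map_one' := rfl, map_mul' := fun a b => rfl }
  have h : eltHom.comp (NHom cs) = MonoidHom.id W := by
    refine cs.ext_simple (fun i => ?_)
    show ((NHom cs) (cs.simple i)).elt = cs.simple i
    rw [NHom, CoxeterSystem.lift_apply_simple]
  exact congrArg (fun f => f w) (congrArg DFunLike.coe h)

private lemma NN_simple (i : B) (x : W) :
    NN cs (cs.simple i) x = if x = cs.simple i then 1 else 0 := by
  rw [NN, NHom, CoxeterSystem.lift_apply_simple]

private lemma NN_mul (u v x : W) : NN cs (u * v) x = NN cs u x + NN cs v (u⁻¹ * x * u) := by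
  rw [NN, map_mul, NGrp.mul_toFun, NHom_elt]
  rfl

private lemma NN_one (x : W) : NN cs 1 x = 0 := by
  rw [NN, map_one]; rfl

private lemma NN_inv (u x : W) : NN cs u⁻¹ (u⁻¹ * x * u) = NN cs u x := by
  have h := NN_mul cs u u⁻¹ x
  rw [mul_inv_cancel, NN_one] at h
  have h2 : ∀ c d : ZMod 2, 0 = c + d → d = c := by decide
  exact h2 _ _ h

private lemma NN_refl {t : W} (ht : cs.IsReflection t) : NN cs t t = 1 := by
  obtain ⟨w, i, rfl⟩ := ht
  set t := w * cs.simple i * w⁻¹ with hts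
  have hwt : w⁻¹ * t * w = cs.simple i := by rw [hts]; group
  rw [(by rw [hts] : t = (w * cs.simple i) * w⁻¹), NN_mul, NN_mul]
  have e1 : w⁻¹ * t * w = cs.simple i := hwt
  have e2 : (w * cs.simple i)⁻¹ * t * (w * cs.simple i) = cs.simple i := by
    rw [hts]; group
  rw [e1, e2, NN_simple, if_pos rfl]
  have e3 : NN cs w⁻¹ (cs.simple i) = NN cs w t := by
    rw [← hwt]; exact NN_inv cs w t
  rw [e3]
  have h2 : ∀ c : ZMod 2, c + 1 + c = 1 := by decide
  exact h2 _

private lemma NN_eq_zero_of_notMem_lis :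
    ∀ (ω : List B) (x : W), x ∉ cs.leftInvSeq ω → NN cs (cs.wordProd ω) x = 0 := by
  intro ω
  induction ω with
  | nil =>
    intro x _
    rw [CoxeterSystem.wordProd_nil, NN_one]
  | cons i ω ih =>
    intro x hx
    have hlis : cs.leftInvSeq (i :: ω) =
        cs.simple i :: List.map (⇑(MulAut.conj (cs.simple i))) (cs.leftInvSeq ω) := rfl
    rw [hlis, List.mem_cons] at hx
    push_neg at hx
    obtain ⟨hx1, hx2⟩ := hx
    rw [CoxeterSystem.wordProd_cons, NN_mul, NN_simple, if_neg hx1, zero_add]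
    refine ih _ ?_
    intro hmem
    refine hx2 ?_
    refine List.mem_map.mpr ⟨(cs.simple i)⁻¹ * x * cs.simple i, hmem, ?_⟩
    show cs.simple i * ((cs.simple i)⁻¹ * x * cs.simple i) * (cs.simple i)⁻¹ = x
    group

private lemma mem_lis_of_lt {t : W} (ht : cs.IsReflection t) (ω : List B)
    (h : cs.length (t * cs.wordProd ω) < cs.length (cs.wordProd ω)) :
    t ∈ cs.leftInvSeq ω := by
  by_contra hmem
  have h0 : NN cs (cs.wordProd ω) t = 0 := NN_eq_zero_of_notMem_lis cs ω t hmem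
  set w := cs.wordProd ω with hw
  have hww : w = t * (t * w) := by rw [← mul_assoc, ht.mul_self, one_mul]
  have h1 : NN cs w t = NN cs t t + NN cs (t * w) (t⁻¹ * t * t) := by
    conv_lhs => rw [hww]
    exact NN_mul cs t (t * w) t
  rw [inv_mul_cancel, one_mul, NN_refl cs ht, h0] at h1
  have h2 : NN cs (t * w) t = 1 := by
    have : ∀ c : ZMod 2, 0 = 1 + c → c = 1 := by decide
    exact this _ h1
  obtain ⟨ν, hνred, hν⟩ := cs.exists_reduced_word' (t * w)
  have h3 : t ∈ cs.leftInvSeq ν := by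
    by_contra hmem2
    have := NN_eq_zero_of_notMem_lis cs ν t hmem2
    rw [← hν, h2] at this
    exact one_ne_zero this
  have h4 := cs.isLeftInversion_of_mem_leftInvSeq hνred h3
  rw [← hν] at h4
  have h5 : t * (t * w) = w := by rw [← mul_assoc, ht.mul_self, one_mul]
  rw [CoxeterSystem.IsLeftInversion, h5] at h4
  omega

/-- Strong exchange property. -/
private lemma strong_exchange {t : W} (ht : cs.IsReflection t) (ω : List B)
    (h : cs.length (t * cs.wordProd ω) < cs.length (cs.wordProd ω)) :
    ∃ j < ω.length, t * cs.wordProd ω = cs.wordProd (ω.eraseIdx j) := by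
  have hmem := mem_lis_of_lt cs ht ω h
  obtain ⟨j, hj, hje⟩ := List.mem_iff_getElem.mp hmem
  rw [cs.length_leftInvSeq] at hj
  refine ⟨j, hj, ?_⟩
  have hgd : (cs.leftInvSeq ω).getD j 1 = t := by
    rw [List.getD_eq_getElem _ _ (by rw [cs.length_leftInvSeq]; exact hj)]
    exact hje
  rw [← hgd]
  exact cs.getD_leftInvSeq_mul_wordProd ω j

/-! ### Bruhat order basics -/

private lemma bruhatLe_length_le {u v : W} (h : BruhatLe cs u v) :
    cs.length u ≤ cs.length v := by
  induction h with
  | refl => exact le_refl _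
  | tail _ hcov ih =>
    have := hcov.1
    omega

private lemma cov_simple_mul {i : B} {x : W}
    (h : cs.length (cs.simple i * x) = cs.length x + 1) :
    BruhatCov cs x (cs.simple i * x) :=
  ⟨h, cs.simple i, cs.isReflection_simple i, rfl⟩

private lemma phi_up {i : B} {x : W}
    (h : cs.length (cs.simple i * x) = cs.length x + 1) :
    phi cs i x = cs.simple i * x := by
  rw [phi, if_pos]
  refine ⟨Relation.ReflTransGen.single (cov_simple_mul cs h), fun he => ?_⟩
  rw [← he] at h
  omega

private lemma phi_down {i : B} {x : W}
    (h : cs.length (cs.simple i * x) + 1 = cs.length x) :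
    phi cs i x = x := by
  rw [phi, if_neg]
  intro hlt
  have := bruhatLe_length_le cs hlt.1
  omega

/-- Exchange-type consequence: if `c ⋖ v`, `s i * v < v` and `s i * c > c`, then `v = s i * c`. -/
private lemma cov_simple_cases {i : B} {c v : W} (hcov : BruhatCov cs c v)
    (hv : cs.length (cs.simple i * v) + 1 = cs.length v)
    (hc : cs.length (cs.simple i * c) = cs.length c + 1) :
    v = cs.simple i * c := by
  obtain ⟨hlen, t, ht, rfl⟩ := hcov
  obtain ⟨ρ, hρred, hρ⟩ := cs.exists_reduced_word' (cs.simple i * (t * c))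
  have hπ : cs.wordProd (i :: ρ) = t * c := by
    rw [CoxeterSystem.wordProd_cons, ← hρ, cs.simple_mul_simple_cancel_left]
  have hρlen : cs.length (cs.simple i * (t * c)) = ρ.length := by
    rw [hρ]; exact hρred
  have hti : cs.length (t * cs.wordProd (i :: ρ)) < cs.length (cs.wordProd (i :: ρ)) := by
    rw [hπ, ← mul_assoc, ht.mul_self, one_mul]
    omega
  obtain ⟨j, hj, hje⟩ := strong_exchange cs ht (i :: ρ) hti
  rw [hπ, ← mul_assoc, ht.mul_self, one_mul] at hje
  match j with
  | 0 =>
    rw [List.eraseIdx_cons_zero, ← hρ] at hje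
    have h5 := congrArg (fun z => cs.simple i * z) hje
    rw [cs.simple_mul_simple_cancel_left] at h5
    exact h5.symm
  | (j' + 1) =>
    exfalso
    rw [List.eraseIdx_cons_succ, CoxeterSystem.wordProd_cons] at hje
    have hsc : cs.simple i * c = cs.wordProd (ρ.eraseIdx j') := by
      rw [hje, cs.simple_mul_simple_cancel_left]
    have hj' : j' < ρ.length := by
      simp only [List.length_cons] at hj
      omega
    have hlen1 : (ρ.eraseIdx j').length + 1 = ρ.length := List.length_eraseIdx_add_one hj'
    have hlen2 := cs.length_wordProd_le (ρ.eraseIdx j')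
    rw [← hsc] at hlen2
    omega

/-- The lifting property of the Bruhat order. -/
private lemma lifting : ∀ (n : ℕ) (u v : W) (i : B), cs.length v ≤ n →
    BruhatLe cs u v → cs.length (cs.simple i * u) = cs.length u + 1 →
    (cs.length (cs.simple i * v) = cs.length v + 1 →
      BruhatLe cs (cs.simple i * u) (cs.simple i * v)) ∧
    (cs.length (cs.simple i * v) + 1 = cs.length v →
      BruhatLe cs (cs.simple i * u) v) := by
  intro n
  induction n with
  | zero =>
    intro u v i hn huv hu
    constructor
    · intro _
      have h1 := bruhatLe_length_le cs huv
      have h2 : u = 1 := cs.length_eq_zero_iff.mp (by omega)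
      have h3 : v = 1 := cs.length_eq_zero_iff.mp (by omega)
      rw [h2, h3]
      exact Relation.ReflTransGen.refl
    · intro h
      omega
  | succ n ih =>
    intro u v i hn huv hu
    rcases Relation.ReflTransGen.cases_tail huv with heq | ⟨c, huc, hcv⟩
    · rw [heq]
      constructor
      · intro _; exact Relation.ReflTransGen.refl
      · intro h
        omega
    · have hlv : cs.length v = cs.length c + 1 := hcv.1
      have hcn : cs.length c ≤ n := by omega
      rcases cs.length_simple_mul c i with hci | hci
      · have h1 : BruhatLe cs (cs.simple i * u) (cs.simple i * c) :=
          (ih u c i hcn huc hu).1 hci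
        constructor
        · intro hvi
          refine h1.tail ?_
          obtain ⟨hl2, t, ht, hvtc⟩ := hcv
          refine ⟨by omega, cs.simple i * t * (cs.simple i)⁻¹, ht.conj _, ?_⟩
          rw [cs.inv_simple, hvtc]
          simp only [mul_assoc, cs.simple_mul_simple_cancel_left]
        · intro hvd
          have hveq := cov_simple_cases cs hcv hvd hci
          rw [hveq]
          exact h1
      · have h2 : BruhatLe cs (cs.simple i * u) c := (ih u c i hcn huc hu).2 hci
        constructor
        · intro hvi
          exact (h2.tail hcv).tail (cov_simple_mul cs hvi)
        · intro _
          exact h2.tail hcv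

private lemma isReduced_cons {i : B} {ω : List B} (h : cs.IsReduced (i :: ω)) :
    cs.IsReduced ω ∧
      cs.length (cs.simple i * cs.wordProd ω) = cs.length (cs.wordProd ω) + 1 := by
  have h1 : cs.length (cs.simple i * cs.wordProd ω) = ω.length + 1 := by
    have := h
    rw [CoxeterSystem.IsReduced, CoxeterSystem.wordProd_cons] at this
    rw [this, List.length_cons]
  have h2 : cs.length (cs.wordProd ω) ≤ ω.length := cs.length_wordProd_le ω
  rcases cs.length_simple_mul (cs.wordProd ω) i with h3 | h3
  · constructor
    · rw [CoxeterSystem.IsReduced]; omega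
    · omega
  · omega

/-! ### Main induction -/

private lemma main_induction : ∀ (ω : List B), cs.IsReduced ω → ∀ y : W,
    cs.length (phiWord cs ω y) = cs.length (phiWord cs ω y * y⁻¹) + cs.length y ∧
    BruhatLe cs (phiWord cs ω y * y⁻¹) (cs.wordProd ω) := by
  intro ω
  induction ω with
  | nil =>
    intro _ y
    have h0 : phiWord cs [] y = y := rfl
    rw [h0, CoxeterSystem.wordProd_nil, mul_inv_cancel, cs.length_one]
    exact ⟨by omega, Relation.ReflTransGen.refl⟩
  | cons i ω ih =>
    intro hred y
    obtain ⟨hr, hx⟩ := isReduced_cons cs hred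
    obtain ⟨h1, h2⟩ := ih hr y
    set z₁ := phiWord cs ω y with hz₁
    have hps : phiWord cs (i :: ω) y = phi cs i z₁ := rfl
    rcases cs.length_simple_mul z₁ i with hup | hdn
    · have hz : phiWord cs (i :: ω) y = cs.simple i * z₁ := by rw [hps, phi_up cs hup]
      have hsa : cs.length (cs.simple i * (z₁ * y⁻¹)) = cs.length (z₁ * y⁻¹) + 1 := by
        rcases cs.length_simple_mul (z₁ * y⁻¹) i with h | h
        · exact h
        · exfalso
          have he : cs.simple i * z₁ = (cs.simple i * (z₁ * y⁻¹)) * y := by group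
          have hle := cs.length_mul_le (cs.simple i * (z₁ * y⁻¹)) y
          rw [← he] at hle
          omega
      have hassoc : cs.simple i * z₁ * y⁻¹ = cs.simple i * (z₁ * y⁻¹) := mul_assoc _ _ _
      constructor
      · rw [hz, hassoc, hsa, hup]
        omega
      · rw [hz, hassoc, CoxeterSystem.wordProd_cons]
        exact (lifting cs (cs.length (cs.wordProd ω)) _ _ i (le_refl _) h2 hsa).1 hx
    · have hz : phiWord cs (i :: ω) y = z₁ := by rw [hps, phi_down cs hdn]
      rw [hz, CoxeterSystem.wordProd_cons]
      exact ⟨h1, h2.tail (cov_simple_mul cs hx)⟩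

end Aux

/-- If `x * y = z` in the Demazure product (i.e. `z = φ_x(y)`, computed along any
reduced word `ω` for `x`), and `x' = z y⁻¹`, then `x' ≤_R z`, `ℓ z = ℓ x' + ℓ y`,
and `x' ≤ x` in the Bruhat order. -/
theorem stmt13 (cs : CoxeterSystem M W) (x y z : W) (ω : List B)
    (hred : cs.IsReduced ω) (hω : cs.wordProd ω = x)
    (hz : phiWord cs ω y = z) :
    rightLe cs (z * y⁻¹) z ∧
      cs.length z = cs.length (z * y⁻¹) + cs.length y ∧
      BruhatLe cs (z * y⁻¹) x := by
  obtain ⟨h1, h2⟩ := main_induction cs ω hred y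
  rw [hz] at h1 h2
  rw [hω] at h2
  refine ⟨?_, h1, h2⟩
  have he : (z * y⁻¹)⁻¹ * z = y := by group
  rw [rightLe, he]
  omega
end PaperStmt
end

section
/- Let $x,y,z$ be elements of a Coxeter group such that $x$ and $y$ are strongly commutative. If $z \le_L xz$ and $z \le_L yz$, then $z \le_L xyz$. -/
/-!
Write `x` and `y` as reduced words. If `s i` and `s j` commute and differ, a left ascent `s i` of
`w` is still an ascent of `s j * w`: otherwise, by the exchange property, `s i` occurs in the left
inversion sequence `s j, s j * u * s j, …` of `j :: ω` for a reduced word `ω` of `w`, so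
`s i = s j * u * s j = u` is a left inversion of `w`. Hence each letter of `y`, added in front of
`z`, remains an ascent once `x` is put in front too, and `ℓ (x * y * z) = ℓ x + ℓ y + ℓ z`.

The exchange property comes from Tits' sign representation of `W` on pairs (reflection, sign): the
parity of the number of occurrences of a reflection in the left inversion sequence of a word
depends only on the element the word represents.
-/

namespace PaperStmt

open scoped Classical

variable {B : Type*} {W : Type*} [Group W] {M : CoxeterMatrix B}

/-- `x` and `y` are strongly commutative: any simple reflection appearing in some
reduced expression of `x` and any appearing in some reduced expression of `y`
are distinct and commute. -/
def StronglyCommutative (cs : CoxeterSystem M W) (x y : W) : Prop :=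
  ∀ i j : B,
    (∃ ω, cs.IsReduced ω ∧ cs.wordProd ω = x ∧ i ∈ ω) →
    (∃ ω, cs.IsReduced ω ∧ cs.wordProd ω = y ∧ j ∈ ω) →
    cs.simple i * cs.simple j = cs.simple j * cs.simple i ∧ cs.simple i ≠ cs.simple j

section

variable (cs : CoxeterSystem M W)

local prefix:100 "s " => cs.simple
local prefix:100 "π " => cs.wordProd
local prefix:100 "ℓ " => cs.length
local prefix:100 "lis " => cs.leftInvSeq

theorem simple_conj_simple_conj (i : B) (t : W) : s i * (s i * t * s i) * s i = t := by
  simp [mul_assoc]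

/-- The generator `s i` of Tits' sign representation of `W` on pairs (reflection, sign). -/
noncomputable def reflectionPerm (i : B) : Equiv.Perm (W × ℤˣ) :=
  Function.Involutive.toPerm (fun p => (s i * p.1 * s i, if p.1 = s i then -p.2 else p.2)) <| by
    rintro ⟨t, ε⟩
    by_cases h : t = s i
    · simp [h]
    · have h' : s i * t * s i ≠ s i := fun h' => h <| by
        rw [← simple_conj_simple_conj cs i t, h']; simp
      simp [h, h', simple_conj_simple_conj]

theorem prod_map_reflectionPerm_reverse_apply (ω : List B) (t : W) (ε : ℤˣ) :
    (ω.reverse.map (reflectionPerm cs)).prod (t, ε) =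
      ((π ω)⁻¹ * t * π ω, ε * (-1) ^ (lis ω).count t) := by
  induction ω generalizing t ε with
  | nil => simp
  | cons i ω ih =>
    have hcount := List.count_map_of_injective (lis ω) _ (MulAut.conj (s i)).injective
      (s i * t * s i)
    rw [MulAut.conj_apply, cs.inv_simple, simple_conj_simple_conj] at hcount
    simp only [List.reverse_cons, List.map_append, List.prod_append, List.map_singleton,
      List.prod_singleton, Equiv.Perm.mul_apply, reflectionPerm, ih]
    rw [CoxeterSystem.leftInvSeq, List.count_cons, hcount, cs.wordProd_cons]
    by_cases h : t = s i
    · subst h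
      simp [pow_succ, mul_assoc]
    · simp [h, Ne.symm h, mul_assoc]

theorem prod_map_reverse_alternatingWord {G : Type*} [Monoid G] (f : B → G) (i j : B) (p : ℕ) :
    ((CoxeterSystem.alternatingWord i j (2 * p)).reverse.map f).prod = (f j * f i) ^ p := by
  induction p with
  | zero => simp [CoxeterSystem.alternatingWord]
  | succ p ih =>
    rw [show 2 * (p + 1) = 2 * p + 1 + 1 by ring, CoxeterSystem.alternatingWord_succ',
      CoxeterSystem.alternatingWord_succ', List.reverse_cons, List.reverse_cons, List.map_append,
      List.map_append, List.prod_append, List.prod_append, ih]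
    simp [pow_succ, mul_assoc]

theorem leftInvSeq_alternatingWord (i j : B) (p : ℕ) :
    lis (CoxeterSystem.alternatingWord i j (2 * p)) =
      (List.range (2 * p)).map fun k => s i * (s j * s i) ^ k := by
  refine List.ext_getElem (by simp) fun k hk _ => ?_
  rw [cs.getElem_leftInvSeq_alternatingWord i j p k (by simpa using hk),
    cs.prod_alternatingWord_eq_mul_pow]
  simp [Nat.not_even_bit1, show (2 * k + 1) / 2 = k by omega]

/-- The left inversion sequence of the braid word of length `2 m` runs twice through the same
`m` reflections. -/
theorem even_count_leftInvSeq_alternatingWord (i j : B) (t : W) :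
    Even ((lis (CoxeterSystem.alternatingWord i j (2 * M i j))).count t) := by
  have hper : ∀ k, s i * (s j * s i) ^ (M i j + k) = s i * (s j * s i) ^ k := by
    intro k
    rw [pow_add, M.symmetric, cs.simple_mul_simple_pow, one_mul]
  rw [leftInvSeq_alternatingWord, two_mul, List.range_add, List.map_append, List.map_map]
  simp only [Function.comp_def, hper, List.count_append]
  exact ⟨_, rfl⟩

theorem isLiftable_reflectionPerm : M.IsLiftable (reflectionPerm cs) := by
  intro i j
  ext ⟨t, ε⟩ : 1
  rw [← prod_map_reverse_alternatingWord, M.symmetric i j, prod_map_reflectionPerm_reverse_apply,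
    cs.prod_alternatingWord_eq_mul_pow, (even_count_leftInvSeq_alternatingWord cs j i t).neg_one_pow]
  simp [cs.simple_mul_simple_pow]

noncomputable def reflectionRep : W →* Equiv.Perm (W × ℤˣ) :=
  cs.lift ⟨reflectionPerm cs, isLiftable_reflectionPerm cs⟩

theorem reflectionRep_wordProd_inv_apply (ω : List B) (t : W) (ε : ℤˣ) :
    reflectionRep cs (π ω)⁻¹ (t, ε) = ((π ω)⁻¹ * t * π ω, ε * (-1) ^ (lis ω).count t) := by
  have hsimple : reflectionRep cs ∘ cs.simple = reflectionPerm cs :=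
    funext (cs.lift_apply_simple (isLiftable_reflectionPerm cs))
  have hword : reflectionRep cs (π ω.reverse) = (ω.reverse.map (reflectionPerm cs)).prod := by
    rw [CoxeterSystem.wordProd, map_list_prod, List.map_map, hsimple]
  rw [← cs.wordProd_reverse, hword, prod_map_reflectionPerm_reverse_apply,
    cs.wordProd_reverse]

theorem neg_one_pow_count_leftInvSeq_eq {ω ω' : List B} (h : π ω = π ω') (t : W) :
    (-1 : ℤˣ) ^ (lis ω).count t = (-1) ^ (lis ω').count t := by
  have h' := reflectionRep_wordProd_inv_apply cs ω t 1
  rw [h, reflectionRep_wordProd_inv_apply] at h'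
  simpa using (Prod.ext_iff.mp h').2.symm

/-- Exchange property for simple reflections: the parity of the number of occurrences of `s i`
depends only on `π ω`, and it is odd for `i :: ω'` with `ω'` a reduced word of `s i * π ω`. -/
theorem simple_mem_leftInvSeq_of_isLeftDescent {ω : List B} {i : B}
    (hi : cs.IsLeftDescent (π ω) i) : s i ∈ lis ω := by
  obtain ⟨ω', hω', hω'_eq⟩ := cs.exists_isReduced (s i * π ω)
  have hnotMem : s i ∉ lis ω' := fun hmem => by
    have := (cs.isLeftInversion_of_mem_leftInvSeq hω' hmem).2
    rw [← hω'_eq, cs.simple_mul_simple_cancel_left] at this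
    exact lt_asymm hi this
  have hcount : (lis (i :: ω')).count (s i) = 1 := by
    have := List.count_map_of_injective (lis ω') _ (MulAut.conj (s i)).injective (s i)
    rw [MulAut.conj_apply, cs.inv_simple, cs.simple_mul_simple_self, one_mul] at this
    rw [CoxeterSystem.leftInvSeq, List.count_cons, this, List.count_eq_zero.mpr hnotMem]
    simp
  have hprod : π (i :: ω') = π ω := by
    rw [cs.wordProd_cons, ← hω'_eq, cs.simple_mul_simple_cancel_left]
  have hparity := neg_one_pow_count_leftInvSeq_eq cs hprod (s i)
  rw [hcount] at hparity
  by_contra hmem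
  rw [List.count_eq_zero.mpr hmem] at hparity
  simp at hparity

theorem not_isLeftDescent_simple_mul {w : W} {i j : B} (hcomm : Commute (s i) (s j))
    (hne : s i ≠ s j) (hi : ¬cs.IsLeftDescent w i) : ¬cs.IsLeftDescent (s j * w) i := by
  intro hdesc
  obtain ⟨ω, hω, rfl⟩ := cs.exists_isReduced w
  have hmem : s i ∈ lis (j :: ω) :=
    simple_mem_leftInvSeq_of_isLeftDescent cs (by rwa [cs.wordProd_cons])
  rw [CoxeterSystem.leftInvSeq, List.mem_cons, List.mem_map] at hmem
  obtain hij | ⟨u, hu, hconj⟩ := hmem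
  · exact hne hij
  · have hu_eq : u = s i := by
      rw [MulAut.conj_apply, cs.inv_simple] at hconj
      rw [← simple_conj_simple_conj cs j u, hconj, ← hcomm.eq]
      simp [mul_assoc]
    rw [hu_eq] at hu
    exact hi (cs.isLeftInversion_of_mem_leftInvSeq hω hu).2

theorem not_isLeftDescent_wordProd_mul {ω : List B} {z : W} {k : B}
    (hω : ∀ i ∈ ω, Commute (s i) (s k) ∧ s i ≠ s k) (hz : ¬cs.IsLeftDescent z k) :
    ¬cs.IsLeftDescent (π ω * z) k := by
  induction ω with
  | nil => simpa using hz
  | cons i ω ih =>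
    have ⟨hcomm, hne⟩ := hω i List.mem_cons_self
    rw [cs.wordProd_cons, mul_assoc]
    exact not_isLeftDescent_simple_mul cs hcomm.symm hne.symm
      (ih fun a ha => hω a (List.mem_cons_of_mem i ha))

theorem length_wordProd_mul_of_cons {i : B} {ω : List B} {z : W}
    (h : ℓ (π (i :: ω) * z) = (i :: ω).length + ℓ z) :
    ¬cs.IsLeftDescent (π ω * z) i ∧ ℓ (π ω * z) = ω.length + ℓ z := by
  rw [cs.wordProd_cons, mul_assoc, List.length_cons] at h
  have hle : ℓ (π ω * z) ≤ ω.length + ℓ z :=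
    (cs.length_mul_le _ _).trans (Nat.add_le_add_right (cs.length_wordProd_le ω) _)
  have hsimple := cs.length_simple_mul (π ω * z) i
  rw [cs.not_isLeftDescent_iff]
  omega

theorem length_wordProd_mul_wordProd_mul {ωx ωy : List B} {z : W}
    (hcomm : ∀ i ∈ ωx, ∀ j ∈ ωy, Commute (s i) (s j) ∧ s i ≠ s j)
    (hx : ℓ (π ωx * z) = ωx.length + ℓ z) (hy : ℓ (π ωy * z) = ωy.length + ℓ z) :
    ℓ (π ωx * π ωy * z) = ωx.length + ωy.length + ℓ z := by
  induction ωy with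
  | nil => simpa using hx
  | cons j ω ih =>
    obtain ⟨hj, hy'⟩ := length_wordProd_mul_of_cons cs hy
    have ih' := ih (fun i hi a ha => hcomm i hi a (List.mem_cons_of_mem j ha)) hy'
    have hjx : Commute (π ωx) (s j) :=
      Commute.list_prod_left _ _ fun _ hs => by
        obtain ⟨i, hi, rfl⟩ := List.mem_map.mp hs
        exact (hcomm i hi j List.mem_cons_self).1
    have hasc := not_isLeftDescent_wordProd_mul cs
      (fun i hi => hcomm i hi j List.mem_cons_self) hj
    rw [cs.not_isLeftDescent_iff] at hasc
    rw [cs.wordProd_cons, ← mul_assoc, hjx.eq, mul_assoc, mul_assoc, hasc, ← mul_assoc, ih',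
      List.length_cons]
    ring

end

theorem leftLe_mul_right_iff (cs : CoxeterSystem M W) (w z : W) :
    leftLe cs z (w * z) ↔ cs.length w + cs.length z = cs.length (w * z) := by
  rw [leftLe, mul_inv_cancel_right]

theorem stmt15 (cs : CoxeterSystem M W) (x y z : W)
    (h : StronglyCommutative cs x y)
    (h1 : leftLe cs z (x * z)) (h2 : leftLe cs z (y * z)) :
    leftLe cs z (x * y * z) := by
  rw [leftLe_mul_right_iff] at h1 h2 ⊢
  obtain ⟨ωx, hωx, rfl⟩ := cs.exists_isReduced x
  obtain ⟨ωy, hωy, rfl⟩ := cs.exists_isReduced y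
  have hxyz := length_wordProd_mul_wordProd_mul cs
    (fun i hi j hj => h i j ⟨ωx, hωx, rfl, hi⟩ ⟨ωy, hωy, rfl, hj⟩)
    (by rw [← hωx.eq, h1]) (by rw [← hωy.eq, h2])
  have := cs.length_mul_le (cs.wordProd ωx) (cs.wordProd ωy)
  have := cs.length_mul_le (cs.wordProd ωx * cs.wordProd ωy) z
  have := hωx.eq
  have := hωy.eq
  omega
end PaperStmt
end
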